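/- arXiv:1805.12500 — 2 statements merged into one kernel-verified Lean document; each statement's English description precedes it below -/
import Mathlib

section
/- For any r < 2, the identity operator on ℓ₁ is not absolutely (r,1)-summing. Concretely: there is no constant C such that for all n and all finite sequences x₁,…,x_n ∈ ℓ₁, (Σ_{i=1}^n ‖x_i‖₁^r)^{1/r} ≤ C · sup_{‖ζ‖_∞ ≤ 1} Σ_{i=1}^n |⟨ζ, x_i⟩|. -/
/-!
Take `N = 2 ^ k` and let `x₁, …, x_N ∈ ℓ₁` be the rows of the `N × N` Walsh–Hadamard matrix `W`
(a deterministic stand-in for a Kahane–Salem–Zygmund sign matrix). Each row has `ℓ₁`-norm `N`, so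
the left-hand side equals `N ^ (1/r + 1)`. For `‖ζ‖_∞ ≤ 1` the pairings `⟨ζ, x_i⟩` are the entries
of `W ζ`, and `Wᵀ W = N • 1` together with Cauchy–Schwarz gives
`∑ |(W ζ)_i| ≤ √N ‖W ζ‖₂ = N ‖ζ‖₂ ≤ N ^ (3/2)`. As `1/r + 1 > 3/2` for `r < 2`, no constant `C`
survives `k → ∞`.
-/

open Finset Function Matrix Filter

noncomputable section

/-- Sylvester's Hadamard matrix: the entry at `(i, j)` is `(-1) ^ ⟨i, j⟩` over `𝔽₂`. -/
def walsh (τ : Type*) [Fintype τ] : Matrix (τ → Bool) (τ → Bool) ℝ :=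
  of fun i j => ∏ t, if i t && j t then -1 else 1

section Walsh

variable {τ : Type*} [Fintype τ]

lemma abs_walsh_apply (i j : τ → Bool) : |walsh τ i j| = 1 := by
  simp [walsh, abs_prod, apply_ite]

lemma walsh_transpose : (walsh τ)ᵀ = walsh τ := by
  ext i j
  simp [walsh, and_comm]

lemma sum_bool_sign_mul_sign (a c : Bool) :
    ∑ b : Bool, (if a && b then -1 else 1 : ℝ) * (if b && c then -1 else 1) =
      if a = c then 2 else 0 := by
  cases a <;> cases c <;> norm_num [Fintype.sum_bool]

lemma walsh_transpose_mul_self [DecidableEq τ] :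
    (walsh τ)ᵀ * walsh τ = ((2 : ℝ) ^ Fintype.card τ) • 1 := by
  ext i i'
  rw [walsh_transpose, mul_apply, Matrix.smul_apply, one_apply]
  calc ∑ j, walsh τ i j * walsh τ j i'
      = ∑ j : τ → Bool, ∏ t,
          (if i t && j t then -1 else 1 : ℝ) * (if j t && i' t then -1 else 1) := by
        simp only [walsh, of_apply, prod_mul_distrib]
    _ = ∏ t, ∑ b : Bool, (if i t && b then -1 else 1 : ℝ) * (if b && i' t then -1 else 1) :=
        (Fintype.prod_sum fun t b =>
          (if i t && b then -1 else 1 : ℝ) * (if b && i' t then -1 else 1)).symm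
    _ = ∏ t, if i t = i' t then (2 : ℝ) else 0 := by
        simp only [sum_bool_sign_mul_sign]
    _ = (2 : ℝ) ^ Fintype.card τ • if i = i' then 1 else 0 := by
        simp [Fintype.prod_ite_zero, funext_iff]

end Walsh

lemma sum_abs_mulVec_le_sqrt {ι κ : Type*} [Fintype ι] [Fintype κ] [DecidableEq κ]
    {H : Matrix ι κ ℝ} {c : ℝ} (hc : 0 ≤ c) (hH : Hᵀ * H = c • 1)
    {η : κ → ℝ} (hη : ∀ b, |η b| ≤ 1) :
    ∑ i, |(H *ᵥ η) i| ≤ √(Fintype.card ι * c * Fintype.card κ) := by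
  have hsq : (H *ᵥ η) ⬝ᵥ (H *ᵥ η) = c * (η ⬝ᵥ η) := by
    rw [dotProduct_mulVec, ← mulVec_transpose, mulVec_mulVec, hH, smul_mulVec,
      one_mulVec, smul_dotProduct, smul_eq_mul]
  have hη2 : η ⬝ᵥ η ≤ Fintype.card κ := by
    rw [dotProduct, ← nsmul_one, ← card_univ, ← sum_const]
    refine sum_le_sum fun b _ => ?_
    nlinarith [abs_le.mp (hη b)]
  apply Real.le_sqrt_of_sq_le
  calc (∑ i, |(H *ᵥ η) i|) ^ 2 ≤ Fintype.card ι * ∑ i, |(H *ᵥ η) i| ^ 2 :=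
        sq_sum_le_card_mul_sum_sq
    _ = Fintype.card ι * (c * (η ⬝ᵥ η)) := by
        rw [← hsq]; simp only [sq, abs_mul_abs_self, dotProduct]
    _ ≤ Fintype.card ι * c * Fintype.card κ := by rw [mul_assoc]; gcongr

lemma sum_abs_walsh_mulVec_le (τ : Type*) [Fintype τ] [DecidableEq τ] {η : (τ → Bool) → ℝ}
    (hη : ∀ b, |η b| ≤ 1) :
    ∑ i, |(walsh τ *ᵥ η) i| ≤ ((2 : ℝ) ^ Fintype.card τ) ^ (3 / 2 : ℝ) := by
  have hcard : (Fintype.card (τ → Bool) : ℝ) = 2 ^ Fintype.card τ := by simp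
  have hN : (0 : ℝ) ≤ 2 ^ Fintype.card τ := by positivity
  calc ∑ i, |(walsh τ *ᵥ η) i|
      ≤ √(2 ^ Fintype.card τ * 2 ^ Fintype.card τ * 2 ^ Fintype.card τ) := by
        simpa only [hcard] using sum_abs_mulVec_le_sqrt hN walsh_transpose_mul_self hη
    _ = ((2 : ℝ) ^ Fintype.card τ) ^ (3 / 2 : ℝ) := by
        rw [← pow_three', Real.sqrt_eq_rpow, ← Real.rpow_natCast, ← Real.rpow_mul hN]
        norm_num

lemma Function.Injective.apply_extend_zero {α β γ δ : Type*} [Zero γ] [Zero δ] {e : α → β}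
    (he : Injective e) (f : α → γ) {F : β → γ → δ} (hF : ∀ j, F j 0 = 0) (j : β) :
    F j (extend e f 0 j) = extend e (fun a => F (e a) (f a)) 0 j := by
  by_cases h : ∃ a, e a = j
  · obtain ⟨a, rfl⟩ := h
    simp only [he.extend_apply]
  · simp only [extend_apply' _ _ _ h, Pi.zero_apply, hF]

def extendL1 {ι : Type*} [Finite ι] (e : ι ↪ ℕ) (f : ι → ℝ) : lp (fun _ : ℕ => ℝ) 1 :=
  ⟨extend e f 0, memℓp_gen <| by
    simp only [ENNReal.toReal_one, Real.rpow_one,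
      e.injective.apply_extend_zero f (F := fun _ x => ‖x‖) (fun _ => norm_zero)]
    exact (summable_extend_zero e.injective).2 (Summable.of_finite)⟩

section ExtendL1

variable {ι : Type*} [Fintype ι] (e : ι ↪ ℕ) (f : ι → ℝ)

lemma coe_extendL1 : (extendL1 e f : ℕ → ℝ) = extend e f 0 := rfl

lemma norm_extendL1 : ‖extendL1 e f‖ = ∑ b, |f b| := by
  rw [lp.norm_eq_tsum_rpow (by norm_num), coe_extendL1]
  simp only [ENNReal.toReal_one, Real.rpow_one, div_one, Real.norm_eq_abs,
    e.injective.apply_extend_zero f (F := fun _ x => |x|) (fun _ => abs_zero),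
    tsum_extend_zero e.injective, tsum_fintype]

lemma tsum_mul_extendL1 (ζ : ℕ → ℝ) : ∑' j, ζ j * extendL1 e f j = f ⬝ᵥ (ζ ∘ e) := by
  simp only [coe_extendL1,
    e.injective.apply_extend_zero f (F := fun j x => ζ j * x) (fun j => mul_zero _),
    tsum_extend_zero e.injective, tsum_fintype, dotProduct, Function.comp_apply, mul_comm]

end ExtendL1

lemma exists_walsh_vectors (k : ℕ) :
    ∃ x : Fin (2 ^ k) → lp (fun _ : ℕ => ℝ) 1, (∀ a, ‖x a‖ = 2 ^ k) ∧
      ∀ ζ : ℕ → ℝ, (∀ j, |ζ j| ≤ 1) → ∑ a, |∑' j, ζ j * x a j| ≤ ((2 : ℝ) ^ k) ^ (3 / 2 : ℝ) := by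
  let σ : (Fin k → Bool) ≃ Fin (2 ^ k) := Fintype.equivFinOfCardEq (by simp)
  let e : (Fin k → Bool) ↪ ℕ := σ.toEmbedding.trans Fin.valEmbedding
  refine ⟨fun a => extendL1 e (walsh (Fin k) (σ.symm a)), fun a => ?_, fun ζ hζ => ?_⟩
  · simp [norm_extendL1, abs_walsh_apply]
  · simp only [tsum_mul_extendL1]
    rw [Equiv.sum_comp σ.symm (fun i => |walsh (Fin k) i ⬝ᵥ (ζ ∘ e)|)]
    simpa [mulVec] using sum_abs_walsh_mulVec_le (Fin k) (η := ζ ∘ e) (fun b => hζ _)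

lemma exists_two_pow_mul_rpow_lt (C : ℝ) {a b : ℝ} (hab : b < a) :
    ∃ k : ℕ, C * ((2 : ℝ) ^ k) ^ b < ((2 : ℝ) ^ k) ^ a := by
  have h : Tendsto (fun k : ℕ => ((2 : ℝ) ^ k) ^ (a - b)) atTop atTop :=
    (tendsto_rpow_atTop (sub_pos.2 hab)).comp (tendsto_pow_atTop_atTop_of_one_lt one_lt_two)
  obtain ⟨k, hk⟩ := (h.eventually_gt_atTop C).exists
  have hN : (0 : ℝ) < 2 ^ k := by positivity
  refine ⟨k, ?_⟩
  calc C * ((2 : ℝ) ^ k) ^ b < ((2 : ℝ) ^ k) ^ (a - b) * ((2 : ℝ) ^ k) ^ b :=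
        mul_lt_mul_of_pos_right hk (Real.rpow_pos_of_pos hN b)
    _ = ((2 : ℝ) ^ k) ^ a := by rw [← Real.rpow_add hN, sub_add_cancel]

end

/-- MacPhail's theorem: for `r < 2`, the identity on `ℓ₁` is not absolutely `(r,1)`-summing. -/
theorem stmt_6 (r : ℝ) (hr0 : 0 < r) (hr : r < 2) :
    ¬ ∃ C : ℝ, ∀ (n : ℕ) (x : Fin n → lp (fun _ : ℕ => ℝ) 1),
      (∑ i, ‖x i‖ ^ r) ^ (1 / r) ≤
        C * ⨆ ζ : {ζ : ℕ → ℝ // ∀ j, |ζ j| ≤ 1},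
          ∑ i, |∑' j, ζ.1 j * (x i : ℕ → ℝ) j| := by
  rintro ⟨C, hC⟩
  have hexp : (3 / 2 : ℝ) < 1 / r + 1 := by linarith [one_div_lt_one_div_of_lt hr0 hr]
  obtain ⟨k, hk⟩ := exists_two_pow_mul_rpow_lt (max C 0) hexp
  obtain ⟨x, hnorm, hsum⟩ := exists_walsh_vectors k
  set N : ℝ := 2 ^ k
  have hN : 0 < N := by positivity
  have hlhs : (∑ a, ‖x a‖ ^ r) ^ (1 / r) = N ^ (1 / r + 1) := by
    simp only [hnorm, sum_const, card_univ, Fintype.card_fin, nsmul_eq_mul, Nat.cast_pow,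
      Nat.cast_ofNat]
    rw [← Real.rpow_one_add' hN.le (by linarith), ← Real.rpow_mul hN.le]
    congr 1
    field_simp
  set S := ⨆ ζ : {ζ : ℕ → ℝ // ∀ j, |ζ j| ≤ 1}, ∑ a, |∑' j, ζ.1 j * (x a : ℕ → ℝ) j|
  have hS0 : 0 ≤ S := Real.iSup_nonneg fun ζ => sum_nonneg fun a _ => abs_nonneg _
  have hS : S ≤ N ^ (3 / 2 : ℝ) := Real.iSup_le (fun ζ => hsum ζ.1 ζ.2) (by positivity)
  have hcontra : N ^ (1 / r + 1) < N ^ (1 / r + 1) :=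
    calc N ^ (1 / r + 1) ≤ C * S := hlhs ▸ hC _ x
      _ ≤ max C 0 * S := mul_le_mul_of_nonneg_right (le_max_left _ _) hS0
      _ ≤ max C 0 * N ^ (3 / 2 : ℝ) := mul_le_mul_of_nonneg_left hS (le_max_right _ _)
      _ < N ^ (1 / r + 1) := hk
  exact lt_irrefl _ hcontra
end

section
/- Let m ≥ p ≥ 2 and r > 0. Every bounded m-linear form on ℓ_p × ⋯ × ℓ_p is absolutely (r,1)-summing if and only if r ≥ p/m. -/
/-!
Khintchine's inequality (averaging over random signs) shows that for `p ≥ 2` the space `ℓ_p`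
satisfies `∑ ‖xᵢ‖^p ≤ ω₁(x)^p`, i.e. it has cotype `p` with constant `1`. Freezing one variable
of an `m`-linear form at a time and applying Hölder's inequality with exponents `p`, `p/k` and
`p/(k+1)` then gives `(∑ |T(xᵢ)|^{p/m})^{m/p} ≤ ‖T‖ ∏ ω₁(x(j))`, and `ℓ_r`-norms decrease in `r`.
Conversely the diagonal form `∑ₖ y₁(k) ⋯ yₘ(k)` is bounded on `ℓ_p` because `p ≤ m`; on the
first `n` unit vectors it makes the left side `n^{1/r}`, while their weak `ℓ₁` norm is `n^{1/p}`,
which forces `1/r ≤ m/p`.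
-/

open scoped BigOperators

/-- Weak `ℓ₁` norm of a finite family. -/
noncomputable def weakL1 {W : Type*} [NormedAddCommGroup W] [NormedSpace ℝ W]
    {n : ℕ} (x : Fin n → W) : ℝ :=
  ⨆ f : {f : W →L[ℝ] ℝ // ‖f‖ ≤ 1}, ∑ i, |f.1 (x i)|

open scoped ENNReal
open Finset Filter

section RpowSums

lemma sum_rpow_le_rpow_sum {ι : Type*} (s : Finset ι) {f : ι → ℝ} (hf : ∀ i ∈ s, 0 ≤ f i)
    {t : ℝ} (ht : 1 ≤ t) : ∑ i ∈ s, f i ^ t ≤ (∑ i ∈ s, f i) ^ t := by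
  classical
  induction s using Finset.induction_on with
  | empty => simp [Real.zero_rpow (by linarith : t ≠ 0)]
  | insert a s ha ih =>
    have hs : ∀ i ∈ s, 0 ≤ f i := fun i hi => hf i (mem_insert_of_mem hi)
    rw [sum_insert ha, sum_insert ha]
    calc f a ^ t + ∑ i ∈ s, f i ^ t ≤ f a ^ t + (∑ i ∈ s, f i) ^ t := by gcongr; exact ih hs
      _ ≤ _ := Real.add_rpow_le_rpow_add (hf a (mem_insert_self a s)) (sum_nonneg hs) ht

lemma rpow_sum_rpow_le_of_le {ι : Type*} (s : Finset ι) {f : ι → ℝ} (hf : ∀ i ∈ s, 0 ≤ f i)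
    {a b : ℝ} (ha : 0 < a) (hab : a ≤ b) :
    (∑ i ∈ s, f i ^ b) ^ (1 / b) ≤ (∑ i ∈ s, f i ^ a) ^ (1 / a) := by
  have hb : 0 < b := ha.trans_le hab
  have hfa : ∀ i ∈ s, 0 ≤ f i ^ a := fun i hi => Real.rpow_nonneg (hf i hi) a
  have hsum : ∑ i ∈ s, f i ^ b ≤ (∑ i ∈ s, f i ^ a) ^ (b / a) := by
    calc ∑ i ∈ s, f i ^ b = ∑ i ∈ s, (f i ^ a) ^ (b / a) := by
          refine sum_congr rfl fun i hi => ?_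
          rw [← Real.rpow_mul (hf i hi), mul_div_cancel₀ _ ha.ne']
      _ ≤ _ := sum_rpow_le_rpow_sum s hfa ((one_le_div ha).2 hab)
  calc (∑ i ∈ s, f i ^ b) ^ (1 / b) ≤ ((∑ i ∈ s, f i ^ a) ^ (b / a)) ^ (1 / b) := by
        gcongr
        exact sum_nonneg fun i hi => Real.rpow_nonneg (hf i hi) b
    _ = (∑ i ∈ s, f i ^ a) ^ (1 / a) := by
        rw [← Real.rpow_mul (sum_nonneg hfa), div_mul_div_comm, mul_one, div_mul_cancel_right₀ hb.ne', one_div]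

lemma sum_mul_rpow_le_of_holderTriple {ι : Type*} (s : Finset ι) {f g : ι → ℝ} {p q r A B : ℝ}
    (hpqr : p.HolderTriple q r) (hf : ∀ i ∈ s, 0 ≤ f i) (hg : ∀ i ∈ s, 0 ≤ g i)
    (hA : 0 ≤ A) (hB : 0 ≤ B) (hfA : ∑ i ∈ s, f i ^ p ≤ A ^ p) (hgB : ∑ i ∈ s, g i ^ q ≤ B ^ q) :
    ∑ i ∈ s, (f i * g i) ^ r ≤ (A * B) ^ r := by
  have hp := hpqr.pos
  have hq := hpqr.symm.pos
  have hF : 0 ≤ ∑ i ∈ s, f i ^ p := sum_nonneg fun i hi => Real.rpow_nonneg (hf i hi) p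
  have hG : 0 ≤ ∑ i ∈ s, g i ^ q := sum_nonneg fun i hi => Real.rpow_nonneg (hg i hi) q
  have hr := hpqr.pos'
  calc ∑ i ∈ s, (f i * g i) ^ r
      ≤ (∑ i ∈ s, f i ^ p) ^ (r / p) * (∑ i ∈ s, g i ^ q) ^ (r / q) :=
        Real.Lr_rpow_le_Lp_mul_Lq_of_nonneg s hpqr hf hg
    _ ≤ (A ^ p) ^ (r / p) * (B ^ q) ^ (r / q) := by
        gcongr
    _ = (A * B) ^ r := by
        rw [← Real.rpow_mul hA, ← Real.rpow_mul hB, mul_div_cancel₀ _ hp.ne',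
          mul_div_cancel₀ _ hq.ne', Real.mul_rpow hA hB]

lemma prod_le_sum_rpow_div {m : ℕ} {t : Fin m → ℝ} (ht0 : ∀ j, 0 ≤ t j) (ht1 : ∀ j, t j ≤ 1)
    {p : ℝ} (hp : 0 < p) (hpm : p ≤ m) : ∏ j, t j ≤ (∑ j, t j ^ p) / m := by
  have hm : (0 : ℝ) < m := hp.trans_le hpm
  calc ∏ j, t j ≤ ∏ j, (t j ^ p) ^ (m : ℝ)⁻¹ := by
        refine prod_le_prod (fun j _ => ht0 j) fun j _ => ?_
        rw [← Real.rpow_mul (ht0 j)]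
        refine Real.self_le_rpow_of_le_one (ht0 j) (ht1 j) ?_
        rw [← div_eq_mul_inv]; exact div_le_one_of_le₀ hpm hm.le
    _ ≤ ∑ j, (m : ℝ)⁻¹ * t j ^ p :=
        Real.geom_mean_le_arith_mean_weighted univ _ _ (fun _ _ => by positivity)
          (by simp [hm.ne']) fun j _ => Real.rpow_nonneg (ht0 j) p
    _ = (∑ j, t j ^ p) / m := by rw [← mul_sum, inv_mul_eq_div]

lemma le_of_forall_natCast_rpow_le {a b C : ℝ} (h : ∀ n : ℕ, (n : ℝ) ^ a ≤ C * (n : ℝ) ^ b) :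
    a ≤ b := by
  by_contra! hab
  have htend : Tendsto (fun n : ℕ => (n : ℝ) ^ (a - b)) atTop atTop :=
    (tendsto_rpow_atTop (sub_pos.2 hab)).comp tendsto_natCast_atTop_atTop
  obtain ⟨n, hCn, hn⟩ := ((htend.eventually_gt_atTop C).and (eventually_gt_atTop 0)).exists
  have hn0 : (0 : ℝ) < n := by exact_mod_cast hn
  rw [Real.rpow_sub hn0, lt_div_iff₀ (Real.rpow_pos_of_pos hn0 b)] at hCn
  exact (h n).not_gt hCn

end RpowSums

section Khintchine

def boolSign (b : Bool) : ℝ := if b then 1 else -1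

lemma boolSign_mul_self (b : Bool) : boolSign b * boolSign b = 1 := by
  cases b <;> simp [boolSign]

lemma abs_boolSign (b : Bool) : |boolSign b| = 1 := by
  cases b <;> simp [boolSign]

lemma boolSign_not (b : Bool) : boolSign (!b) = -boolSign b := by
  cases b <;> simp [boolSign]

variable {n : ℕ}

lemma sum_boolSign_mul_boolSign (i j : Fin n) :
    ∑ ε : Fin n → Bool, boolSign (ε i) * boolSign (ε j) = if i = j then 2 ^ n else 0 := by
  split_ifs with hij
  · subst hij
    simp [boolSign_mul_self]
  · -- flipping the `i`-th sign permutes the sign vectors and negates every term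
    let τ : Equiv.Perm (Fin n → Bool) :=
      Function.Involutive.toPerm (fun ε => Function.update ε i (!ε i)) fun ε => by simp
    have hflip : ∀ ε : Fin n → Bool, boolSign (τ ε i) * boolSign (τ ε j) =
        -(boolSign (ε i) * boolSign (ε j)) := fun ε => by
      change boolSign (Function.update ε i (!ε i) i) * boolSign (Function.update ε i (!ε i) j) = _
      rw [Function.update_self, Function.update_of_ne (Ne.symm hij), boolSign_not, neg_mul]
    have h := Equiv.sum_comp τ fun ε => boolSign (ε i) * boolSign (ε j)
    simp only [hflip, sum_neg_distrib] at h
    linarith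

lemma sum_sq_sum_mul_boolSign (c : Fin n → ℝ) :
    ∑ ε : Fin n → Bool, (∑ i, c i * boolSign (ε i)) ^ 2 = 2 ^ n * ∑ i, c i ^ 2 := by
  calc ∑ ε : Fin n → Bool, (∑ i, c i * boolSign (ε i)) ^ 2
      = ∑ i, ∑ j, c i * c j * ∑ ε : Fin n → Bool, boolSign (ε i) * boolSign (ε j) := by
        simp_rw [sq, sum_mul_sum, mul_sum]
        rw [sum_comm]
        refine sum_congr rfl fun i _ => ?_
        rw [sum_comm]
        exact sum_congr rfl fun j _ => sum_congr rfl fun ε _ => by ring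
    _ = 2 ^ n * ∑ i, c i ^ 2 := by
        simp [sum_boolSign_mul_boolSign, mul_sum, sq, mul_comm]

lemma sq_rpow_half (a q : ℝ) : (a ^ 2) ^ (q / 2) = |a| ^ q := by
  rw [← sq_abs, ← Real.rpow_natCast, ← Real.rpow_mul (abs_nonneg a)]
  congr 1
  ring

/-- Khintchine's inequality for exponents `q ≥ 2`, lower estimate with constant `1`. -/
lemma sum_abs_rpow_le_mean_abs_sum_mul_boolSign_rpow (c : Fin n → ℝ) {q : ℝ} (hq : 2 ≤ q) :
    ∑ i, |c i| ^ q ≤ (2 ^ n)⁻¹ * ∑ ε : Fin n → Bool, |∑ i, c i * boolSign (ε i)| ^ q := by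
  have hweights : ∑ _ε : Fin n → Bool, ((2 : ℝ) ^ n)⁻¹ = 1 := by simp
  calc ∑ i, |c i| ^ q = ∑ i, (c i ^ 2) ^ (q / 2) := by simp only [sq_rpow_half]
    _ ≤ (∑ i, c i ^ 2) ^ (q / 2) :=
        sum_rpow_le_rpow_sum _ (fun i _ => sq_nonneg _) (by linarith)
    _ = (∑ ε : Fin n → Bool, (2 ^ n)⁻¹ * (∑ i, c i * boolSign (ε i)) ^ 2) ^ (q / 2) := by
        rw [← mul_sum, sum_sq_sum_mul_boolSign, inv_mul_cancel_left₀ (by positivity)]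
    _ ≤ ∑ ε : Fin n → Bool, (2 ^ n)⁻¹ * ((∑ i, c i * boolSign (ε i)) ^ 2) ^ (q / 2) :=
        Real.rpow_arith_mean_le_arith_mean_rpow _ _ _ (fun _ _ => by positivity) hweights
          (fun _ _ => sq_nonneg _) (by linarith)
    _ = (2 ^ n)⁻¹ * ∑ ε : Fin n → Bool, |∑ i, c i * boolSign (ε i)| ^ q := by
        simp only [sq_rpow_half, mul_sum]

end Khintchine

section WeakL1

variable {E : Type*} [NormedAddCommGroup E] [NormedSpace ℝ E] {n : ℕ}

lemma weakL1_bddAbove (x : Fin n → E) :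
    BddAbove (Set.range fun f : {f : E →L[ℝ] ℝ // ‖f‖ ≤ 1} => ∑ i, |f.1 (x i)|) := by
  refine ⟨∑ i, ‖x i‖, ?_⟩
  rintro _ ⟨f, rfl⟩
  exact sum_le_sum fun i _ => (f.1.le_of_opNorm_le f.2 (x i)).trans_eq (one_mul _)

lemma sum_abs_le_weakL1 (x : Fin n → E) {f : E →L[ℝ] ℝ} (hf : ‖f‖ ≤ 1) :
    ∑ i, |f (x i)| ≤ weakL1 x :=
  le_ciSup (weakL1_bddAbove x) (⟨f, hf⟩ : {f : E →L[ℝ] ℝ // ‖f‖ ≤ 1})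

lemma weakL1_nonneg (x : Fin n → E) : 0 ≤ weakL1 x := by
  simpa using sum_abs_le_weakL1 x (f := 0) (by simp)

lemma norm_sum_smul_le_weakL1 (x : Fin n → E) {ε : Fin n → ℝ} (hε : ∀ i, |ε i| ≤ 1) :
    ‖∑ i, ε i • x i‖ ≤ weakL1 x := by
  obtain ⟨g, hg, hgz⟩ := exists_dual_vector'' ℝ (∑ i, ε i • x i)
  replace hgz : g (∑ i, ε i • x i) = ‖∑ i, ε i • x i‖ := by simpa using hgz
  calc ‖∑ i, ε i • x i‖ = ∑ i, ε i * g (x i) := by simp [← hgz]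
    _ ≤ ∑ i, |g (x i)| := sum_le_sum fun i _ =>
        (le_abs_self _).trans <| by
          rw [abs_mul]; exact mul_le_of_le_one_left (abs_nonneg _) (hε i)
    _ ≤ weakL1 x := sum_abs_le_weakL1 x hg

lemma weakL1_le_of_norm_sum_smul_le (x : Fin n → E) {c : ℝ}
    (h : ∀ ε : Fin n → ℝ, (∀ i, |ε i| ≤ 1) → ‖∑ i, ε i • x i‖ ≤ c) : weakL1 x ≤ c := by
  have : Nonempty {f : E →L[ℝ] ℝ // ‖f‖ ≤ 1} := ⟨⟨0, by simp⟩⟩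
  refine ciSup_le fun ⟨f, hf⟩ => ?_
  have hsign : ∀ s : SignType, |(s : ℝ)| ≤ 1 := fun s => by cases s <;> simp
  calc ∑ i, |f (x i)| = f (∑ i, (SignType.sign (f (x i)) : ℝ) • x i) := by
        simp [sign_mul_self]
    _ ≤ ‖∑ i, (SignType.sign (f (x i)) : ℝ) • x i‖ :=
        (le_abs_self _).trans ((f.le_of_opNorm_le hf _).trans_eq (one_mul _))
    _ ≤ c := h _ fun i => hsign _

end WeakL1

section Summing

variable {E F : Type*} [NormedAddCommGroup E] [NormedSpace ℝ E]
  [NormedAddCommGroup F] [NormedSpace ℝ F]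

/-- The identity of `E` is absolutely `(q, 1)`-summing with constant `1`. -/
def AbsolutelySummingId (q : ℝ) (E : Type*) [NormedAddCommGroup E] [NormedSpace ℝ E] : Prop :=
  ∀ (n : ℕ) (x : Fin n → E), ∑ i, ‖x i‖ ^ q ≤ weakL1 x ^ q

lemma norm_inv_smul_curryLeft_le {k : ℕ}
    (S : ContinuousMultilinearMap ℝ (fun _ : Fin (k + 1) => E) F) (v : E) :
    ‖‖v‖⁻¹ • S.curryLeft v‖ ≤ ‖S‖ := by
  rw [norm_smul, norm_inv, norm_norm]
  rcases eq_or_ne ‖v‖ 0 with hv | hv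
  · simp [hv]
  · calc ‖v‖⁻¹ * ‖S.curryLeft v‖ ≤ ‖v‖⁻¹ * (‖S‖ * ‖v‖) := by
          gcongr
          simpa only [S.curryLeft_norm] using S.curryLeft.le_opNorm v
      _ = ‖S‖ := by field_simp

lemma norm_apply_cons_eq {k : ℕ}
    (S : ContinuousMultilinearMap ℝ (fun _ : Fin (k + 1) => E) F) (v : E) (y : Fin k → E) :
    ‖S (Fin.cons v y)‖ = ‖v‖ * ‖(‖v‖⁻¹ • S.curryLeft v) y‖ := by
  rcases eq_or_ne v 0 with rfl | hv
  · simp [S.map_coord_zero 0 (Fin.cons_zero 0 y)]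
  · rw [smul_apply, norm_smul, norm_inv, norm_norm, S.curryLeft_apply,
      mul_inv_cancel_left₀ (norm_ne_zero_iff.2 hv)]

variable {q : ℝ}

theorem sum_norm_apply_rpow_le (hq : 0 < q) (hE : AbsolutelySummingId q E) {k : ℕ} (hk : 1 ≤ k)
    {n : ℕ} (S : Fin n → ContinuousMultilinearMap ℝ (fun _ : Fin k => E) F) {M : ℝ} (hM : 0 ≤ M)
    (hSM : ∀ i, ‖S i‖ ≤ M) (x : Fin k → Fin n → E) :
    ∑ i, ‖S i (fun j => x j i)‖ ^ (q / k) ≤ (M * ∏ j, weakL1 (x j)) ^ (q / k) := by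
  induction k, hk using Nat.le_induction with
  | base =>
    simp only [Nat.cast_one, div_one, Fin.prod_univ_one]
    calc ∑ i, ‖S i (fun j => x j i)‖ ^ q ≤ ∑ i, (M * ‖x 0 i‖) ^ q := by
          gcongr with i
          simpa using (S i).le_of_opNorm_le (hSM i) (fun j => x j i)
      _ = M ^ q * ∑ i, ‖x 0 i‖ ^ q := by
          simp only [Real.mul_rpow hM (norm_nonneg _), mul_sum]
      _ ≤ M ^ q * weakL1 (x 0) ^ q := by gcongr; exact hE n (x 0)
      _ = (M * weakL1 (x 0)) ^ q := (Real.mul_rpow hM (weakL1_nonneg _)).symm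
  | succ k hk ih =>
    set S' := fun i => ‖x 0 i‖⁻¹ • (S i).curryLeft (x 0 i)
    have hsplit : ∀ i, ‖S i (fun j => x j i)‖ = ‖x 0 i‖ * ‖S' i (fun j => x j.succ i)‖ := by
      intro i
      rw [← norm_apply_cons_eq]
      exact congrArg (‖S i ·‖) (Fin.cons_self_tail _).symm
    have hk0 : (0 : ℝ) < k := by exact_mod_cast hk
    have hholder : q.HolderTriple (q / k) (q / (k + 1)) :=
      ⟨by field_simp; ring, hq, div_pos hq hk0⟩
    have hW : 0 ≤ M * ∏ j : Fin k, weakL1 (x j.succ) :=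
      mul_nonneg hM (prod_nonneg fun j _ => weakL1_nonneg _)
    calc ∑ i, ‖S i (fun j => x j i)‖ ^ (q / ↑(k + 1))
        = ∑ i, (‖x 0 i‖ * ‖S' i (fun j => x j.succ i)‖) ^ (q / (k + 1)) := by
          push_cast; simp only [hsplit]
      _ ≤ (weakL1 (x 0) * (M * ∏ j : Fin k, weakL1 (x j.succ))) ^ (q / (k + 1)) :=
          sum_mul_rpow_le_of_holderTriple _ hholder (fun _ _ => norm_nonneg _)
            (fun _ _ => norm_nonneg _) (weakL1_nonneg _) hW (hE n (x 0))
            (ih S' (fun i => (norm_inv_smul_curryLeft_le _ _).trans (hSM i)) _)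
      _ = (M * ∏ j, weakL1 (x j)) ^ (q / ↑(k + 1)) := by
          rw [Fin.prod_univ_succ]; push_cast; ring_nf

theorem exists_summing_bound_of_div_le (hq : 0 < q) (hE : AbsolutelySummingId q E) {m : ℕ} (hm : 1 ≤ m)
    {r : ℝ} (hr : q / m ≤ r) (T : ContinuousMultilinearMap ℝ (fun _ : Fin m => E) F) :
    ∃ C : ℝ, 0 < C ∧ ∀ (n : ℕ) (x : Fin m → Fin n → E),
      (∑ i, ‖T (fun j => x j i)‖ ^ r) ^ (1 / r) ≤ C * ∏ j, weakL1 (x j) := by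
  refine ⟨‖T‖ + 1, by positivity, fun n x => ?_⟩
  have hs : 0 < q / m := div_pos hq (by exact_mod_cast hm)
  have hW : 0 ≤ ‖T‖ * ∏ j, weakL1 (x j) :=
    mul_nonneg (norm_nonneg T) (prod_nonneg fun j _ => weakL1_nonneg _)
  calc (∑ i, ‖T (fun j => x j i)‖ ^ r) ^ (1 / r)
      ≤ (∑ i, ‖T (fun j => x j i)‖ ^ (q / m)) ^ (1 / (q / m)) :=
        rpow_sum_rpow_le_of_le _ (fun _ _ => norm_nonneg _) hs hr
    _ ≤ ((‖T‖ * ∏ j, weakL1 (x j)) ^ (q / m)) ^ (1 / (q / m)) := by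
        refine Real.rpow_le_rpow (sum_nonneg fun _ _ => Real.rpow_nonneg (norm_nonneg _) _)
          ?_ (by positivity)
        exact sum_norm_apply_rpow_le hq hE hm (fun _ => T) (norm_nonneg T) (fun _ => le_rfl) x
    _ = ‖T‖ * ∏ j, weakL1 (x j) := by
        rw [← Real.rpow_mul hW, mul_one_div_cancel hs.ne', Real.rpow_one]
    _ ≤ (‖T‖ + 1) * ∏ j, weakL1 (x j) := by
        gcongr
        · exact prod_nonneg fun j _ => weakL1_nonneg _
        · linarith

end Summing

section lp

variable {ι : Type*} {p : ℝ≥0∞} [Fact (1 ≤ p)]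

theorem absolutelySummingId_lp (hp : 2 ≤ p.toReal) :
    AbsolutelySummingId p.toReal (lp (fun _ : ι => ℝ) p) := by
  intro n x
  have hp0 : 0 < p.toReal := by linarith
  have hsum : ∀ y : lp (fun _ : ι => ℝ) p, Summable fun k => ‖y k‖ ^ p.toReal :=
    fun y => (lp.memℓp y).summable hp0
  let z : (Fin n → Bool) → lp (fun _ : ι => ℝ) p := fun ε => ∑ i, boolSign (ε i) • x i
  have hz : ∀ ε k, z ε k = ∑ i, x i k * boolSign (ε i) := fun ε k => by
    simp only [z, lp.coeFn_sum, Finset.sum_apply, lp.coeFn_smul, Pi.smul_apply, smul_eq_mul,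
      mul_comm]
  calc ∑ i, ‖x i‖ ^ p.toReal = ∑' k, ∑ i, ‖x i k‖ ^ p.toReal := by
        simp only [lp.norm_rpow_eq_tsum hp0]
        exact (Summable.tsum_finsetSum fun i _ => hsum (x i)).symm
    _ ≤ ∑' k, (2 ^ n)⁻¹ * ∑ ε : Fin n → Bool, ‖z ε k‖ ^ p.toReal := by
        refine Summable.tsum_le_tsum (fun k => ?_) (summable_sum fun i _ => hsum (x i))
          ((summable_sum fun ε _ => hsum (z ε)).mul_left _)
        simp only [hz, Real.norm_eq_abs]
        exact sum_abs_rpow_le_mean_abs_sum_mul_boolSign_rpow _ hp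
    _ = (2 ^ n)⁻¹ * ∑ ε : Fin n → Bool, ‖z ε‖ ^ p.toReal := by
        simp only [lp.norm_rpow_eq_tsum hp0, tsum_mul_left]
        rw [Summable.tsum_finsetSum fun ε _ => hsum (z ε)]
    _ ≤ (2 ^ n)⁻¹ * ∑ _ε : Fin n → Bool, weakL1 x ^ p.toReal := by
        gcongr with ε
        exact norm_sum_smul_le_weakL1 x fun i => (abs_boolSign _).le
    _ = weakL1 x ^ p.toReal := by simp

end lp

section Diagonal

variable {ι : Type*} {p : ℝ≥0∞} {m : ℕ}

local notation "ℓ" => lp (fun _ : ι => ℝ) p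

variable (ι p m) in
noncomputable def coordProd (k : ι) : MultilinearMap ℝ (fun _ : Fin m => ℓ) ℝ :=
  (MultilinearMap.mkPiAlgebra ℝ (Fin m) ℝ).compLinearMap fun _ => lp.evalₗ (fun _ : ι => ℝ) p k

lemma coordProd_apply (k : ι) (y : Fin m → ℓ) : coordProd ι p m k y = ∏ j, y j k := by
  simp [coordProd]

variable [Fact (1 ≤ p)]

lemma summable_and_tsum_prod_abs_le (hp : p ≠ ∞) (hpm : p.toReal ≤ m) (y : Fin m → ℓ) :
    Summable (fun k => ∏ j, |y j k|) ∧ ∑' k, ∏ j, |y j k| ≤ ∏ j, ‖y j‖ := by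
  have hp0 : 0 < p.toReal := (ENNReal.toReal_pos_iff_ne_top p).2 hp
  have hm : (0 : ℝ) < m := hp0.trans_le hpm
  have happly : ∀ j k, |y j k| ≤ ‖y j‖ := fun j k =>
    lp.norm_apply_le_norm (zero_lt_one.trans_le Fact.out).ne' (y j) k
  -- normalise each `y j` to norm `1` (junk value `0` when `y j = 0`)
  set t : Fin m → ι → ℝ := fun j k => |y j k| / ‖y j‖
  have ht0 : ∀ j k, 0 ≤ t j k := fun j k => by positivity
  have htp : ∀ j k, t j k ^ p.toReal = ‖y j k‖ ^ p.toReal / ‖y j‖ ^ p.toReal := fun j k =>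
    Real.div_rpow (abs_nonneg _) (norm_nonneg _) _
  have ht_summable : ∀ j, Summable fun k => t j k ^ p.toReal := fun j => by
    simp only [htp]; exact ((lp.memℓp (y j)).summable hp0).div_const _
  have ht_tsum : ∀ j, ∑' k, t j k ^ p.toReal ≤ 1 := fun j => by
    simp only [htp]
    rw [tsum_div_const, ← lp.norm_rpow_eq_tsum hp0]
    exact div_self_le_one _
  set g : ι → ℝ := fun k => (∏ j, ‖y j‖) * ((∑ j, t j k ^ p.toReal) / m)
  have hg : Summable g :=
    ((summable_sum fun j _ => ht_summable j).div_const _).mul_left _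
  have hle : ∀ k, ∏ j, |y j k| ≤ g k := fun k => by
    have hfac : ∏ j, |y j k| = (∏ j, ‖y j‖) * ∏ j, t j k := by
      rw [← prod_mul_distrib]
      refine prod_congr rfl fun j _ => (mul_div_cancel_of_imp' fun h => ?_).symm
      exact le_antisymm (h ▸ happly j k) (abs_nonneg _)
    rw [hfac]
    exact mul_le_mul_of_nonneg_left (prod_le_sum_rpow_div (fun j => ht0 j k)
      (fun j => div_le_one_of_le₀ (happly j k) (norm_nonneg _)) hp0 hpm)
      (prod_nonneg fun j _ => norm_nonneg _)
  have hsummable : Summable (fun k => ∏ j, |y j k|) :=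
    hg.of_nonneg_of_le (fun k => prod_nonneg fun j _ => abs_nonneg _) hle
  refine ⟨hsummable, (hsummable.tsum_le_tsum hle hg).trans ?_⟩
  calc ∑' k, g k = (∏ j, ‖y j‖) * ((∑ j, ∑' k, t j k ^ p.toReal) / m) := by
        rw [tsum_mul_left, tsum_div_const, Summable.tsum_finsetSum fun j _ => ht_summable j]
    _ ≤ (∏ j, ‖y j‖) * ((∑ _j : Fin m, (1 : ℝ)) / m) := by
        gcongr
        exact ht_tsum _
    _ = ∏ j, ‖y j‖ := by simp [hm.ne']

lemma summable_coordProd (hp : p ≠ ∞) (hpm : p.toReal ≤ m) (y : Fin m → ℓ) :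
    Summable fun k => coordProd ι p m k y := by
  refine Summable.of_abs ?_
  simpa only [coordProd_apply, abs_prod] using (summable_and_tsum_prod_abs_le hp hpm y).1

variable (ι) in
noncomputable def diagForm (hp : p ≠ ∞) (hpm : p.toReal ≤ m) :
    ContinuousMultilinearMap ℝ (fun _ : Fin m => ℓ) ℝ :=
  MultilinearMap.mkContinuous
    { toFun := fun y => ∑' k, coordProd ι p m k y
      map_update_add' := fun y i a b => by
        simp only [MultilinearMap.map_update_add]
        exact (summable_coordProd hp hpm _).tsum_add (summable_coordProd hp hpm _)
      map_update_smul' := fun y i c a => by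
        simp only [MultilinearMap.map_update_smul, smul_eq_mul, tsum_mul_left] }
    1 fun y => by
      rw [one_mul]
      refine (norm_tsum_le_tsum_norm ?_).trans ?_ <;>
        simp only [Real.norm_eq_abs, coordProd_apply, abs_prod]
      exacts [(summable_and_tsum_prod_abs_le hp hpm y).1,
        (summable_and_tsum_prod_abs_le hp hpm y).2]

lemma diagForm_apply (hp : p ≠ ∞) (hpm : p.toReal ≤ m) (y : Fin m → ℓ) :
    diagForm ι hp hpm y = ∑' k, ∏ j, y j k := by
  simp [diagForm, coordProd_apply]

end Diagonal

section Necessity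

variable {p : ℝ≥0∞} {m n : ℕ}

local notation "ℓ" => lp (fun _ : ℕ => ℝ) p

lemma sum_smul_single_apply (ε : Fin n → ℝ) (k : ℕ) :
    (∑ i, ε i • lp.single p (i : ℕ) (1 : ℝ) : ℓ) k = if h : k < n then ε ⟨k, h⟩ else 0 := by
  simp only [lp.coeFn_sum, Finset.sum_apply, lp.coeFn_smul, Pi.smul_apply, smul_eq_mul,
    lp.single_apply, Pi.single_apply, mul_ite, mul_one, mul_zero]
  split_ifs with h
  · rw [Fintype.sum_eq_single ⟨k, h⟩ fun i hi => if_neg fun hk => hi (Fin.ext hk.symm)]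
    simp
  · exact sum_eq_zero fun i _ => if_neg fun hk : k = i => h (hk ▸ i.2)

variable [Fact (1 ≤ p)]

lemma diagForm_single (hp : p ≠ ∞) (hpm : p.toReal ≤ m) (hm : m ≠ 0) (i : ℕ) :
    diagForm ℕ hp hpm (fun _ => lp.single p i (1 : ℝ)) = 1 := by
  rw [diagForm_apply, tsum_eq_single i fun k hk => by simp [hk, hm]]
  simp

lemma norm_sum_smul_single_le (hp : p ≠ ∞) {ε : Fin n → ℝ} (hε : ∀ i, |ε i| ≤ 1) :
    ‖(∑ i, ε i • lp.single p (i : ℕ) (1 : ℝ) : ℓ)‖ ≤ (n : ℝ) ^ p.toReal⁻¹ := by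
  have hp0 : 0 < p.toReal := (ENNReal.toReal_pos_iff_ne_top p).2 hp
  set v : ℓ := ∑ i, ε i • lp.single p (i : ℕ) (1 : ℝ)
  have hv : ∀ k, ‖v k‖ ^ p.toReal ≤ if k ∈ range n then 1 else 0 := fun k => by
    rw [show v k = _ from sum_smul_single_apply ε k]
    simp only [mem_range]
    split_ifs
    · exact Real.rpow_le_one (norm_nonneg _) (hε _) hp0.le
    · simp [hp0.ne']
  refine lp.norm_le_of_forall_sum_le hp0 (by positivity) fun s => ?_
  calc ∑ k ∈ s, ‖v k‖ ^ p.toReal ≤ ∑ k ∈ s, if k ∈ range n then (1 : ℝ) else 0 :=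
        sum_le_sum fun k _ => hv k
    _ = #(s ∩ range n) := by rw [sum_ite_mem, sum_const, nsmul_one]
    _ ≤ n := by exact_mod_cast (card_le_card inter_subset_right).trans (card_range n).le
    _ = ((n : ℝ) ^ p.toReal⁻¹) ^ p.toReal := by
        rw [← Real.rpow_mul n.cast_nonneg, inv_mul_cancel₀ hp0.ne', Real.rpow_one]

lemma weakL1_single_le (hp : p ≠ ∞) :
    weakL1 (fun i : Fin n => (lp.single p (i : ℕ) (1 : ℝ) : ℓ)) ≤ (n : ℝ) ^ p.toReal⁻¹ :=
  weakL1_le_of_norm_sum_smul_le _ fun _ hε => norm_sum_smul_single_le hp hε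

theorem le_of_diagForm_summing (hp : p ≠ ∞) (hpm : p.toReal ≤ m) {r : ℝ} (hr : 0 < r) {C : ℝ}
    (hC0 : 0 ≤ C) (hC : ∀ (n : ℕ) (x : Fin m → Fin n → ℓ),
      (∑ i, ‖diagForm ℕ hp hpm (fun j => x j i)‖ ^ r) ^ (1 / r) ≤ C * ∏ j, weakL1 (x j)) :
    p.toReal / m ≤ r := by
  have hp0 : 0 < p.toReal := (ENNReal.toReal_pos_iff_ne_top p).2 hp
  have hm : (0 : ℝ) < m := hp0.trans_le hpm
  have hn : ∀ n : ℕ, (n : ℝ) ^ (1 / r) ≤ C * (n : ℝ) ^ (m / p.toReal) := fun n => by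
    have h := hC n fun _ i => lp.single p (i : ℕ) (1 : ℝ)
    simp only [diagForm_single hp hpm (Nat.cast_pos.1 hm).ne', norm_one, Real.one_rpow,
      sum_const, card_univ, Fintype.card_fin, nsmul_eq_mul, mul_one, prod_const] at h
    refine h.trans (mul_le_mul_of_nonneg_left ?_ hC0)
    calc weakL1 (fun i : Fin n => (lp.single p (i : ℕ) (1 : ℝ) : ℓ)) ^ m
          ≤ ((n : ℝ) ^ p.toReal⁻¹) ^ m := by
            gcongr
            · exact weakL1_nonneg _
            · exact weakL1_single_le hp
        _ = (n : ℝ) ^ (m / p.toReal) := by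
            rw [← Real.rpow_natCast, ← Real.rpow_mul n.cast_nonneg, inv_mul_eq_div]
  have := le_of_forall_natCast_rpow_le hn
  rwa [one_div_le hr (by positivity), one_div_div] at this

end Necessity

/-- For `m ≥ p ≥ 2`, every bounded `m`-linear form on `ℓ_p^m` is absolutely `(r,1)`-summing
iff `r ≥ p/m`. -/
theorem stmt_19 (m : ℕ) (p : ℝ) [Fact (1 ≤ ENNReal.ofReal p)] (hp : 2 ≤ p) (hpm : p ≤ (m : ℝ)) (r : ℝ) (hr : 0 < r) :
    (∀ T : ContinuousMultilinearMap ℝ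
        (fun _ : Fin m => lp (fun _ : ℕ => ℝ) (ENNReal.ofReal p)) ℝ,
      ∃ C : ℝ, 0 < C ∧ ∀ (n : ℕ)
        (x : Fin m → Fin n → lp (fun _ : ℕ => ℝ) (ENNReal.ofReal p)),
        (∑ i : Fin n, ‖T (fun j => x j i)‖ ^ r) ^ (1 / r) ≤ C * ∏ j, weakL1 (x j))
      ↔ p / (m : ℝ) ≤ r := by
  have hp' : (ENNReal.ofReal p).toReal = p := ENNReal.toReal_ofReal (by linarith)
  have hpm' : (ENNReal.ofReal p).toReal ≤ m := by rwa [hp']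
  constructor
  · intro H
    obtain ⟨C, hC0, hC⟩ := H (diagForm ℕ ENNReal.ofReal_ne_top hpm')
    simpa only [hp'] using le_of_diagForm_summing ENNReal.ofReal_ne_top hpm' hr hC0.le hC
  · intro hpr
    have hm : 1 ≤ m := by exact_mod_cast (by linarith : (1 : ℝ) ≤ m)
    refine exists_summing_bound_of_div_le (by linarith) (absolutelySummingId_lp ?_) hm ?_ <;> rwa [hp']
end
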